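/- arXiv:1605.08833 — 2 statements merged into one kernel-verified Lean document; each statement's English description precedes it below -/
import Mathlib

section
/- With F, b, n as above, for every σ ≥ 0 (componentwise) and every z ∈ [-1,1]^n satisfying (1/n) F z ≥ b (componentwise), the predictor g_j = clip(⟨x_j, σ⟩) achieves loss ℓ(z, g) = (1/n) Σ_j (1 − z_j g_j)/2 ≤ γ(σ)/2, where γ(σ) = −⟨b, σ⟩ + (1/n) Σ_j Ψ(⟨x_j, σ⟩). -/
noncomputable def Psi (x : ℝ) : ℝ := max 1 |x|
noncomputable def clip (x : ℝ) : ℝ := min 1 (max (-1) x)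

/-!
Pointwise, `1 - t * clip s ≤ Psi s - t * s` for `|t| ≤ 1`, because `Psi s - 1 = |s - clip s|`
bounds `t * (s - clip s)`. Averaging over `j` with `t = z j`, `s = ⟨x_j, σ⟩` and bounding the
correlation term `(1/n) Σ_j z_j ⟨x_j, σ⟩ = ⟨(1/n) F z, σ⟩` from below by `⟨b, σ⟩` (weak duality,
using `σ ≥ 0`) gives the claim.
-/

open Finset

lemma Psi_sub_one_eq_abs_sub_clip (s : ℝ) : Psi s - 1 = |s - clip s| := by
  unfold Psi clip
  rcases le_total s (-1) with hs | hs
  · rw [max_eq_left hs, min_eq_right (by norm_num), abs_of_nonpos (by linarith),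
      max_eq_right (by linarith), abs_of_nonpos (by linarith)]
    ring
  rcases le_total s 1 with hs' | hs'
  · rw [max_eq_right hs, min_eq_right hs', max_eq_left (abs_le.mpr ⟨hs, hs'⟩)]
    simp
  · rw [abs_of_nonneg (by linarith : 0 ≤ s), max_eq_right hs', max_eq_right hs,
      min_eq_left hs', abs_of_nonneg (by linarith : (0 : ℝ) ≤ s - 1)]

lemma one_sub_mul_clip_le {s t : ℝ} (ht : t ∈ Set.Icc (-1 : ℝ) 1) :
    1 - t * clip s ≤ Psi s - t * s := by
  have hclip : t * (s - clip s) ≤ |s - clip s| :=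
    calc t * (s - clip s) ≤ |t| * |s - clip s| := by rw [← abs_mul]; exact le_abs_self _
      _ ≤ 1 * |s - clip s| := by gcongr; exact abs_le.mpr ht
      _ = |s - clip s| := one_mul _
  linarith [Psi_sub_one_eq_abs_sub_clip s]

lemma sum_mul_le_of_le_mul_sum {ι κ : Type*} [Fintype ι] [Fintype κ] (F : ι → κ → ℝ)
    (b σ : ι → ℝ) (z : κ → ℝ) (c : ℝ) (hσ : ∀ i, 0 ≤ σ i)
    (hb : ∀ i, b i ≤ c * ∑ j, F i j * z j) :
    ∑ i, b i * σ i ≤ c * ∑ j, z j * ∑ i, F i j * σ i :=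
  calc ∑ i, b i * σ i ≤ ∑ i, (c * ∑ j, F i j * z j) * σ i := by
        gcongr with i
        · exact hσ i
        · exact hb i
    _ = c * ∑ j, z j * ∑ i, F i j * σ i := by
        simp only [mul_sum, sum_mul]
        rw [sum_comm]
        exact sum_congr rfl fun j _ => sum_congr rfl fun i _ => by ring

theorem loss_le_half_slack_general (p n : ℕ) (F : Fin p → Fin n → ℝ)
    (b : Fin p → ℝ)
    (σ : Fin p → ℝ) (hσ : ∀ i, 0 ≤ σ i)
    (z : Fin n → ℝ) (hz : ∀ j, z j ∈ Set.Icc (-1 : ℝ) 1)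
    (hb : ∀ i, b i ≤ (1 / (n : ℝ)) * ∑ j, F i j * z j) :
    (1 / (n : ℝ)) * ∑ j, (1 - z j * clip (∑ i, F i j * σ i)) / 2 ≤
      (-(∑ i, b i * σ i) + (1 / (n : ℝ)) * ∑ j, Psi (∑ i, F i j * σ i)) / 2 := by
  set s : Fin n → ℝ := fun j => ∑ i, F i j * σ i
  have hloss : ∑ j, (1 - z j * clip (s j)) ≤ ∑ j, Psi (s j) - ∑ j, z j * s j := by
    rw [← sum_sub_distrib]
    exact sum_le_sum fun j _ => one_sub_mul_clip_le (hz j)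
  have hdual : ∑ i, b i * σ i ≤ (1 / (n : ℝ)) * ∑ j, z j * s j :=
    sum_mul_le_of_le_mul_sum F b σ z _ hσ hb
  have hn : (0 : ℝ) ≤ 1 / (n : ℝ) := by positivity
  rw [← sum_div]
  nlinarith [mul_le_mul_of_nonneg_left hloss hn]

theorem loss_le_half_slack (p n : ℕ) (hn : 0 < n) (F : Fin p → Fin n → ℝ)
    (hF : ∀ i j, F i j ∈ Set.Icc (-1 : ℝ) 1) (b : Fin p → ℝ)
    (σ : Fin p → ℝ) (hσ : ∀ i, 0 ≤ σ i)
    (z : Fin n → ℝ) (hz : ∀ j, z j ∈ Set.Icc (-1 : ℝ) 1)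
    (hb : ∀ i, b i ≤ (1 / (n : ℝ)) * ∑ j, F i j * z j) :
    (1 / (n : ℝ)) * ∑ j, (1 - z j * clip (∑ i, F i j * σ i)) / 2 ≤
      (-(∑ i, b i * σ i) + (1 / (n : ℝ)) * ∑ j, Psi (∑ i, F i j * σ i)) / 2 :=
  loss_le_half_slack_general p n F b σ hσ z hz hb
end

section
/- With F, b as above, suppose the constraint set Z = {z ∈ [-1,1]^n : (1/n) F z ≥ b} is nonempty. Then min_{g ∈ [-1,1]^n} max_{z ∈ Z} (1/n) Σ_j (1 − z_j g_j)/2 ≤ (1/2) inf_{σ ≥ 0} γ(σ), where γ(σ) = −⟨b, σ⟩ + (1/n) Σ_j Ψ(⟨x_j, σ⟩). -/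
open Finset

noncomputable def clampUnit (a : ℝ) : ℝ := max (-1) (min 1 a)

lemma clampUnit_mem_Icc (a : ℝ) : clampUnit a ∈ Set.Icc (-1 : ℝ) 1 :=
  ⟨le_max_left _ _, max_le (by norm_num) (min_le_left _ _)⟩

lemma one_sub_mul_clampUnit_le {z : ℝ} (hz : z ∈ Set.Icc (-1 : ℝ) 1) (a : ℝ) :
    1 - z * clampUnit a ≤ Psi a - a * z := by
  obtain ⟨hz₁, hz₂⟩ := hz
  unfold clampUnit Psi
  rcases le_or_gt a (-1) with ha | ha
  · rw [min_eq_right (by linarith), max_eq_left ha, abs_of_nonpos (by linarith),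
      max_eq_right (by linarith)]
    nlinarith
  rcases le_or_gt a 1 with ha' | ha'
  · rw [min_eq_right ha', max_eq_right ha.le, max_eq_left (abs_le.mpr ⟨ha.le, ha'⟩)]
    linarith [mul_comm a z]
  · rw [min_eq_left ha'.le, max_eq_right (by norm_num), abs_of_pos (by linarith),
      max_eq_right ha'.le]
    nlinarith

lemma sum_mul_le_of_forall_le {ι κ : Type*} [Fintype ι] [Fintype κ]
    {F : ι → κ → ℝ} {b σ : ι → ℝ} {z : κ → ℝ} {c : ℝ}
    (hσ : ∀ i, 0 ≤ σ i) (hb : ∀ i, b i ≤ c * ∑ j, F i j * z j) :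
    ∑ i, b i * σ i ≤ c * ∑ j, (∑ i, F i j * σ i) * z j := calc
  ∑ i, b i * σ i ≤ ∑ i, (c * ∑ j, F i j * z j) * σ i :=
    sum_le_sum fun i _ => mul_le_mul_of_nonneg_right (hb i) (hσ i)
  _ = c * ∑ j, (∑ i, F i j * σ i) * z j := by
    simp only [mul_sum, sum_mul]
    rw [sum_comm]
    exact sum_congr rfl fun _ _ => sum_congr rfl fun _ _ => by ring

section Game

variable {p n : ℕ}

noncomputable def avgLoss (z g : Fin n → ℝ) : ℝ := (1 / (n : ℝ)) * ∑ j, (1 - z j * g j) / 2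

noncomputable def dualObjective (F : Fin p → Fin n → ℝ) (b σ : Fin p → ℝ) : ℝ :=
  -(∑ i, b i * σ i) + (1 / (n : ℝ)) * ∑ j, Psi (∑ i, F i j * σ i)

lemma avgLoss_nonneg {z g : Fin n → ℝ} (hz : ∀ j, z j ∈ Set.Icc (-1 : ℝ) 1)
    (hg : ∀ j, g j ∈ Set.Icc (-1 : ℝ) 1) : 0 ≤ avgLoss z g := by
  refine mul_nonneg (by positivity) (sum_nonneg fun j _ => ?_)
  obtain ⟨hz₁, hz₂⟩ := hz j
  obtain ⟨hg₁, hg₂⟩ := hg j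
  nlinarith

lemma avgLoss_clampUnit_le_half_dualObjective {F : Fin p → Fin n → ℝ} {b σ : Fin p → ℝ}
    {z : Fin n → ℝ} (hz : ∀ j, z j ∈ Set.Icc (-1 : ℝ) 1)
    (hb : ∀ i, b i ≤ (1 / (n : ℝ)) * ∑ j, F i j * z j) (hσ : ∀ i, 0 ≤ σ i) :
    avgLoss z (fun j => clampUnit (∑ i, F i j * σ i)) ≤ (1 / 2) * dualObjective F b σ := by
  set a : Fin n → ℝ := fun j => ∑ i, F i j * σ i
  have hloss : ∑ j, (1 - z j * clampUnit (a j)) / 2 ≤ ∑ j, (Psi (a j) - a j * z j) / 2 :=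
    sum_le_sum fun j _ => by linarith [one_sub_mul_clampUnit_le (hz j) (a j)]
  have hdual := sum_mul_le_of_forall_le hσ hb
  calc avgLoss z (fun j => clampUnit (a j))
      ≤ (1 / (n : ℝ)) * ∑ j, (Psi (a j) - a j * z j) / 2 :=
        mul_le_mul_of_nonneg_left hloss (by positivity)
    _ = (1 / 2) * (-((1 / (n : ℝ)) * ∑ j, a j * z j) + (1 / (n : ℝ)) * ∑ j, Psi (a j)) := by
        rw [← sum_div, sum_sub_distrib]
        ring
    _ ≤ (1 / 2) * dualObjective F b σ := by
        unfold dualObjective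
        linarith

end Game

theorem minimax_le_half_inf_slack_general (p n : ℕ) (F : Fin p → Fin n → ℝ)
    (b : Fin p → ℝ)
    (Z : Set (Fin n → ℝ))
    (hZ : Z = {z | (∀ j, z j ∈ Set.Icc (-1 : ℝ) 1) ∧
      ∀ i, b i ≤ (1 / (n : ℝ)) * ∑ j, F i j * z j})
    (hZne : Z.Nonempty) :
    sInf ((fun g : Fin n → ℝ =>
        sSup ((fun z : Fin n → ℝ => (1 / (n : ℝ)) * ∑ j, (1 - z j * g j) / 2) '' Z)) ''
        {g | ∀ j, g j ∈ Set.Icc (-1 : ℝ) 1}) ≤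
      (1 / 2) * sInf ((fun σ : Fin p → ℝ =>
        -(∑ i, b i * σ i) + (1 / (n : ℝ)) * ∑ j, Psi (∑ i, F i j * σ i)) ''
        {σ | ∀ i, 0 ≤ σ i}) := by
  change sInf ((fun g => sSup ((avgLoss · g) '' Z)) '' _) ≤
    (1 / 2) * sInf (dualObjective F b '' _)
  set value := fun g : Fin n → ℝ => sSup ((avgLoss · g) '' Z)
  set cube := {g : Fin n → ℝ | ∀ j, g j ∈ Set.Icc (-1 : ℝ) 1}
  subst hZ
  have hvalue_bdd : BddBelow (value '' cube) := by
    refine ⟨0, ?_⟩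
    rintro _ ⟨g, hg, rfl⟩
    exact Real.sSup_nonneg (by rintro _ ⟨z, hz, rfl⟩; exact avgLoss_nonneg hz.1 hg)
  have hdual : 2 * sInf (value '' cube) ≤ sInf (dualObjective F b '' {σ | ∀ i, 0 ≤ σ i}) := by
    refine le_csInf ⟨_, 0, fun _ => le_rfl, rfl⟩ ?_
    rintro _ ⟨σ, hσ, rfl⟩
    let g := fun j => clampUnit (∑ i, F i j * σ i)
    have hinf_le : sInf (value '' cube) ≤ value g :=
      csInf_le hvalue_bdd ⟨g, fun j => clampUnit_mem_Icc _, rfl⟩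
    have hvalue_le : value g ≤ (1 / 2) * dualObjective F b σ := by
      refine csSup_le (hZne.image _) ?_
      rintro _ ⟨z, hz, rfl⟩
      exact avgLoss_clampUnit_le_half_dualObjective hz.1 hz.2 hσ
    linarith
  linarith

theorem minimax_le_half_inf_slack (p n : ℕ) (F : Fin p → Fin n → ℝ)
    (hF : ∀ i j, F i j ∈ Set.Icc (-1 : ℝ) 1) (b : Fin p → ℝ)
    (Z : Set (Fin n → ℝ))
    (hZ : Z = {z | (∀ j, z j ∈ Set.Icc (-1 : ℝ) 1) ∧
      ∀ i, b i ≤ (1 / (n : ℝ)) * ∑ j, F i j * z j})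
    (hZne : Z.Nonempty) :
    sInf ((fun g : Fin n → ℝ =>
        sSup ((fun z : Fin n → ℝ => (1 / (n : ℝ)) * ∑ j, (1 - z j * g j) / 2) '' Z)) ''
        {g | ∀ j, g j ∈ Set.Icc (-1 : ℝ) 1}) ≤
      (1 / 2) * sInf ((fun σ : Fin p → ℝ =>
        -(∑ i, b i * σ i) + (1 / (n : ℝ)) * ∑ j, Psi (∑ i, F i j * σ i)) ''
        {σ | ∀ i, 0 ≤ σ i}) :=
  minimax_le_half_inf_slack_general p n F b Z hZ hZne
end
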